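/- For every real number k with 0 ≤ k < 1, the complete elliptic integrals satisfy the Landen-type identity E(2√k/(1+k)) = (2E(k) − (1−k²)K(k))/(1+k). -/

import Mathlib

/-!
Write `Δ_k(θ) = √(1 - k² sin² θ)` and `m = 2√k/(1+k)`. Gauss' substitution
`sin θ = (1+k) sin x / (1 + k sin² x)` maps `[0, π/2]` onto itself, with
`dθ = (1+k)(1 - k sin² x) / ((1 + k sin² x) Δ_k(x)) dx` and
`Δ_m(θ) = (1 - k sin² x) / (1 + k sin² x)`. Hence
`E(m) = ∫ (1+k)(1 - k sin² x)² / ((1 + k sin² x)² Δ_k(x)) dx`, and this integrand differs from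
`(2 Δ_k - (1 - k²)/Δ_k) / (1+k)` by the derivative of
`2k/(1+k) · sin x cos x Δ_k(x) / (1 + k sin² x)`, which vanishes at both ends of `[0, π/2]`.
-/

open Real

/-- Complete elliptic integral of the first kind. -/
noncomputable def completeEllipticK (k : ℝ) : ℝ :=
  ∫ θ in (0:ℝ)..(π/2), 1 / Real.sqrt (1 - k^2 * Real.sin θ ^ 2)

/-- Complete elliptic integral of the second kind. -/
noncomputable def completeEllipticE (k : ℝ) : ℝ :=
  ∫ θ in (0:ℝ)..(π/2), Real.sqrt (1 - k^2 * Real.sin θ ^ 2)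

open Set intervalIntegral

noncomputable def ellipticDelta (k θ : ℝ) : ℝ := √(1 - k ^ 2 * sin θ ^ 2)

noncomputable def landenAngle (k x : ℝ) : ℝ := arcsin ((1 + k) * sin x / (1 + k * sin x ^ 2))

noncomputable def landenIntegrand (k x : ℝ) : ℝ :=
  (1 + k) * (1 - k * sin x ^ 2) ^ 2 / ((1 + k * sin x ^ 2) ^ 2 * ellipticDelta k x)

noncomputable def landenCorrection (k x : ℝ) : ℝ :=
  2 * k / (1 + k) * (sin x * cos x * ellipticDelta k x / (1 + k * sin x ^ 2))

section

variable {k : ℝ}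

lemma one_sub_sq_mul_sin_sq_pos (hk : |k| < 1) (θ : ℝ) : 0 < 1 - k ^ 2 * sin θ ^ 2 := by
  have := (sq_lt_one_iff_abs_lt_one k).2 hk
  nlinarith [sin_sq_le_one θ, sq_nonneg (sin θ), sq_nonneg k]

lemma one_add_mul_sin_sq_pos (hk : -1 < k) (θ : ℝ) : 0 < 1 + k * sin θ ^ 2 := by
  rcases le_or_gt 0 k with hk₀ | hk₀
  · positivity
  · nlinarith [sin_sq_le_one θ]

@[fun_prop]
lemma continuous_ellipticDelta (k : ℝ) : Continuous (ellipticDelta k) := by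
  unfold ellipticDelta
  fun_prop

lemma completeEllipticE_eq_integral (k : ℝ) :
    completeEllipticE k = ∫ θ in (0)..(π / 2), ellipticDelta k θ :=
  rfl

lemma ellipticDelta_pos (hk : |k| < 1) (θ : ℝ) : 0 < ellipticDelta k θ :=
  sqrt_pos.2 (one_sub_sq_mul_sin_sq_pos hk θ)

lemma ellipticDelta_sq (hk : |k| < 1) (θ : ℝ) :
    ellipticDelta k θ ^ 2 = 1 - k ^ 2 * sin θ ^ 2 :=
  sq_sqrt (one_sub_sq_mul_sin_sq_pos hk θ).le

lemma hasDerivAt_ellipticDelta (hk : |k| < 1) (θ : ℝ) :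
    HasDerivAt (ellipticDelta k) (-(k ^ 2 * sin θ * cos θ) / ellipticDelta k θ) θ := by
  have h := (((hasDerivAt_sin θ).pow 2).const_mul (k ^ 2)).const_sub 1
  convert h.sqrt (one_sub_sq_mul_sin_sq_pos hk θ).ne' using 1
  · rfl
  · simp only [ellipticDelta, Pi.pow_apply]
    norm_num
    ring

lemma sin_landenAngle (hk₀ : -1 < k) (hk₁ : k ≤ 1) (x : ℝ) :
    sin (landenAngle k x) = (1 + k) * sin x / (1 + k * sin x ^ 2) := by
  have hv := one_add_mul_sin_sq_pos hk₀ x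
  have hs := neg_one_le_sin x
  have hs' := sin_le_one x
  have hks : 0 ≤ 1 + k * sin x := by
    nlinarith [mul_nonneg (by linarith : 0 ≤ 1 + k) (by linarith : 0 ≤ 1 + sin x)]
  have hks' : 0 ≤ 1 - k * sin x := by
    nlinarith [mul_nonneg (by linarith : 0 ≤ 1 + k) (by linarith : 0 ≤ 1 - sin x)]
  refine sin_arcsin ?_ ?_
  · rw [le_div_iff₀ hv]
    nlinarith [mul_nonneg (by linarith : 0 ≤ 1 + sin x) hks]
  · rw [div_le_one hv]
    nlinarith [mul_nonneg (by linarith : 0 ≤ 1 - sin x) hks']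

lemma landenAngle_zero (k : ℝ) : landenAngle k 0 = 0 := by
  simp [landenAngle]

lemma landenAngle_pi_div_two (hk : k ≠ -1) : landenAngle k (π / 2) = π / 2 := by
  have : 1 + k ≠ 0 := fun h => hk (by linarith)
  simp [landenAngle, this]

lemma continuous_landenAngle (hk : -1 < k) : Continuous (landenAngle k) :=
  continuous_arcsin.comp <| Continuous.div (by fun_prop) (by fun_prop) fun x =>
    (one_add_mul_sin_sq_pos hk x).ne'

lemma one_sub_sq_landen (hk : |k| < 1) (x : ℝ) :
    1 - ((1 + k) * sin x / (1 + k * sin x ^ 2)) ^ 2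
      = (cos x * ellipticDelta k x / (1 + k * sin x ^ 2)) ^ 2 := by
  have hv := (one_add_mul_sin_sq_pos (abs_lt.1 hk).1 x).ne'
  simp only [div_pow, mul_pow]
  rw [ellipticDelta_sq hk, cos_sq']
  field_simp
  ring

lemma hasDerivAt_landenAngle (hk : |k| < 1) {x : ℝ} (hx : x ∈ Ioo 0 (π / 2)) :
    HasDerivAt (landenAngle k)
      ((1 + k) * (1 - k * sin x ^ 2) / ((1 + k * sin x ^ 2) * ellipticDelta k x)) x := by
  have hk' := abs_lt.1 hk
  have hv := one_add_mul_sin_sq_pos hk'.1 x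
  have hΔ := ellipticDelta_pos hk x
  have hc : 0 < cos x := cos_pos_of_mem_Ioo ⟨by linarith [hx.1, pi_pos], hx.2⟩
  have hf : HasDerivAt (fun t => (1 + k) * sin t / (1 + k * sin t ^ 2))
      ((1 + k) * cos x * (1 - k * sin x ^ 2) / (1 + k * sin x ^ 2) ^ 2) x := by
    refine (((hasDerivAt_sin x).const_mul (1 + k)).div
      (((hasDerivAt_sin x).pow 2).const_mul k |>.const_add 1) hv.ne').congr_deriv ?_
    simp only [Pi.pow_apply]
    ring
  have hf_lt : |(1 + k) * sin x / (1 + k * sin x ^ 2)| < 1 := by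
    refine (sq_lt_one_iff_abs_lt_one _).1 ?_
    have := one_sub_sq_landen hk x
    have : 0 < (cos x * ellipticDelta k x / (1 + k * sin x ^ 2)) ^ 2 := by positivity
    linarith
  refine ((hasDerivAt_arcsin (abs_lt.1 hf_lt).1.ne' (abs_lt.1 hf_lt).2.ne).comp x hf).congr_deriv ?_
  rw [one_sub_sq_landen hk, sqrt_sq (by positivity)]
  field_simp

lemma ellipticDelta_landen_landenAngle (hk₀ : 0 ≤ k) (hk₁ : k ≤ 1) (x : ℝ) :
    ellipticDelta (2 * √k / (1 + k)) (landenAngle k x)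
      = (1 - k * sin x ^ 2) / (1 + k * sin x ^ 2) := by
  have hv := one_add_mul_sin_sq_pos (by linarith : -1 < k) x
  have hks : 0 ≤ 1 - k * sin x ^ 2 := by nlinarith [sin_sq_le_one x]
  rw [ellipticDelta, sin_landenAngle (by linarith) hk₁, ← sqrt_sq (div_nonneg hks hv.le)]
  congr 1
  rw [div_pow, mul_pow, sq_sqrt hk₀]
  field_simp
  ring

lemma hasDerivAt_landenCorrection (hk : |k| < 1) (x : ℝ) :
    HasDerivAt (landenCorrection k)
      (landenIntegrand k x
        - (2 * ellipticDelta k x - (1 - k ^ 2) / ellipticDelta k x) / (1 + k)) x := by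
  have hk' := abs_lt.1 hk
  have hv := one_add_mul_sin_sq_pos hk'.1 x
  have hΔ := ellipticDelta_pos hk x
  have h1k : 0 < 1 + k := by linarith
  refine ((((hasDerivAt_sin x).mul (hasDerivAt_cos x)).mul (hasDerivAt_ellipticDelta hk x)).div
    (((hasDerivAt_sin x).pow 2).const_mul k |>.const_add 1) hv.ne' |>.const_mul
      (2 * k / (1 + k))).congr_deriv ?_
  have hsc := sin_sq_add_cos_sq x
  have hΔsq := ellipticDelta_sq hk x
  simp only [Pi.pow_apply, Pi.mul_apply, landenIntegrand]
  field_simp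
  norm_num
  set s := sin x
  set c := cos x
  linear_combination
    (2 * k * c ^ 2 - 2 * k * s ^ 2 - 2 * k ^ 2 * s ^ 2 * c ^ 2 - 2 * k ^ 2 * s ^ 4
      + 2 * (1 + k * s ^ 2) ^ 2) * hΔsq
    - (-2 * k + 2 * k ^ 2 * s ^ 2 + 4 * k ^ 3 * s ^ 2) * hsc

lemma landenCorrection_zero (k : ℝ) : landenCorrection k 0 = 0 := by
  simp [landenCorrection]

lemma landenCorrection_pi_div_two (k : ℝ) : landenCorrection k (π / 2) = 0 := by
  simp [landenCorrection]

lemma integral_landenIntegrand (hk : |k| < 1) :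
    ∫ x in (0)..(π / 2), landenIntegrand k x
      = (2 * completeEllipticE k - (1 - k ^ 2) * completeEllipticK k) / (1 + k) := by
  have hv x := (one_add_mul_sin_sq_pos (abs_lt.1 hk).1 x).ne'
  have hΔ x := (ellipticDelta_pos hk x).ne'
  have hI : Continuous (landenIntegrand k) :=
    Continuous.div (by fun_prop) (by fun_prop) fun x => mul_ne_zero (pow_ne_zero 2 (hv x)) (hΔ x)
  have hΔinv : Continuous fun x => 1 / ellipticDelta k x :=
    Continuous.div (by fun_prop) (by fun_prop) hΔ
  have hP : Continuous fun x =>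
      (2 * ellipticDelta k x - (1 - k ^ 2) / ellipticDelta k x) / (1 + k) := by
    simp_rw [div_eq_mul_one_div (1 - k ^ 2)]
    fun_prop
  have hW : ∫ x in (0)..(π / 2),
      (landenIntegrand k x - (2 * ellipticDelta k x - (1 - k ^ 2) / ellipticDelta k x) / (1 + k))
        = 0 := by
    rw [integral_eq_sub_of_hasDerivAt (fun x _ => hasDerivAt_landenCorrection hk x)
      ((hI.sub hP).intervalIntegrable _ _), landenCorrection_pi_div_two, landenCorrection_zero,
      sub_zero]
  calc ∫ x in (0)..(π / 2), landenIntegrand k x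
      = ∫ x in (0)..(π / 2),
          (2 * ellipticDelta k x - (1 - k ^ 2) * (1 / ellipticDelta k x)) / (1 + k) := by
        rw [integral_sub (hI.intervalIntegrable _ _) (hP.intervalIntegrable _ _), sub_eq_zero] at hW
        simp_rw [hW, mul_one_div]
    _ = (2 * (∫ x in (0)..(π / 2), ellipticDelta k x)
          - (1 - k ^ 2) * ∫ x in (0)..(π / 2), 1 / ellipticDelta k x) / (1 + k) := by
        rw [integral_div,
          integral_sub (((continuous_ellipticDelta k).const_mul 2).intervalIntegrable _ _)
            ((hΔinv.const_mul _).intervalIntegrable _ _),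
          integral_const_mul, integral_const_mul]
    _ = (2 * completeEllipticE k - (1 - k ^ 2) * completeEllipticK k) / (1 + k) := rfl

lemma completeEllipticE_landen (hk₀ : 0 ≤ k) (hk₁ : k < 1) :
    completeEllipticE (2 * √k / (1 + k)) = ∫ x in (0)..(π / 2), landenIntegrand k x := by
  have hk : |k| < 1 := abs_lt.2 ⟨by linarith, hk₁⟩
  have hv x := (one_add_mul_sin_sq_pos (abs_lt.1 hk).1 x).ne'
  have hΔ x := (ellipticDelta_pos hk x).ne'
  have hcov := integral_comp_mul_deriv'' (a := 0) (b := π / 2) (f := landenAngle k)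
    (g := ellipticDelta (2 * √k / (1 + k))) (continuous_landenAngle (abs_lt.1 hk).1).continuousOn
    (fun x hx =>
      (hasDerivAt_landenAngle hk (by simpa [pi_div_two_pos.le] using hx)).hasDerivWithinAt)
    (Continuous.div (by fun_prop) (by fun_prop) fun x => mul_ne_zero (hv x) (hΔ x)).continuousOn
    (continuous_ellipticDelta _).continuousOn
  rw [landenAngle_zero, landenAngle_pi_div_two (by linarith)] at hcov
  rw [completeEllipticE_eq_integral, ← hcov]
  refine integral_congr fun x _ => ?_
  simp only [Function.comp, ellipticDelta_landen_landenAngle hk₀ hk₁.le, landenIntegrand]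
  field_simp

end

/-- Landen-type identity: `E(2√k/(1+k)) = (2E(k) − (1−k²)K(k))/(1+k)` for `0 ≤ k < 1`. -/
theorem landen_E (k : ℝ) (hk0 : 0 ≤ k) (hk1 : k < 1) :
    completeEllipticE (2 * Real.sqrt k / (1 + k)) =
      (2 * completeEllipticE k - (1 - k^2) * completeEllipticK k) / (1 + k) := by
  rw [completeEllipticE_landen hk0 hk1, integral_landenIntegrand (abs_lt.2 ⟨by linarith, hk1⟩)]
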